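/- arXiv:1001.1145 — 4 statements merged into one kernel-verified Lean document; each statement's English description precedes it below -/
import Mathlib

section
/- Suppose u, h, f are smooth functions of (x,t), λ ∈ ℝ, and suppose h_t = λ (u h)_x, f_t = 2 λ u_x f + λ u f_x, and h is nowhere zero. Then (f/h)_t = λ (u f / h)_x. -/
open Real

noncomputable def pdx (f : ℝ → ℝ → ℝ) (x t : ℝ) : ℝ := deriv (fun y => f y t) x

noncomputable def pdt (f : ℝ → ℝ → ℝ) (x t : ℝ) : ℝ := deriv (fun s => f x s) t

/-- The material derivative `D_t = ∂/∂t + u ∂/∂x` associated to the velocity `u`. -/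
noncomputable def matDt (u f : ℝ → ℝ → ℝ) : ℝ → ℝ → ℝ :=
  fun x t => pdt f x t + u x t * pdx f x t

lemma diffx (g : ℝ → ℝ → ℝ) (hg : ContDiff ℝ (⊤ : ℕ∞) (Function.uncurry g)) (x t : ℝ) :
    DifferentiableAt ℝ (fun y => g y t) x := by
  have := (hg.differentiable (by simp) (x, t)).comp x
    (((differentiableAt_id (𝕜 := ℝ) (x := x)).prodMk (differentiableAt_const t)))
  exact this

lemma difft (g : ℝ → ℝ → ℝ) (hg : ContDiff ℝ (⊤ : ℕ∞) (Function.uncurry g)) (x t : ℝ) :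
    DifferentiableAt ℝ (fun s => g x s) t := by
  have := (hg.differentiable (by simp) (x, t)).comp t
    (((differentiableAt_const x).prodMk differentiableAt_id))
  exact this

theorem statement3
    (u h f : ℝ → ℝ → ℝ) (lam : ℝ)
    (hu : ContDiff ℝ (⊤ : ℕ∞) (Function.uncurry u))
    (hh : ContDiff ℝ (⊤ : ℕ∞) (Function.uncurry h))
    (hf : ContDiff ℝ (⊤ : ℕ∞) (Function.uncurry f))
    (hne : ∀ x t, h x t ≠ 0)
    (heqh : ∀ x t, pdt h x t = lam * pdx (fun x t => u x t * h x t) x t)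
    (heqf : ∀ x t, pdt f x t = 2 * lam * pdx u x t * f x t + lam * u x t * pdx f x t) :
    ∀ x t, pdt (fun x t => f x t / h x t) x t
      = lam * pdx (fun x t => u x t * f x t / h x t) x t := by
  intro x t
  have dux := diffx u hu x t
  have dhx := diffx h hh x t
  have dfx := diffx f hf x t
  have dht := difft h hh x t
  have dft := difft f hf x t
  -- expand heqh
  have hprod : pdx (fun x t => u x t * h x t) x t = pdx u x t * h x t + u x t * pdx h x t := by
    simp only [pdx]
    rw [deriv_fun_mul dux dhx]
  have hht : pdt h x t = lam * (pdx u x t * h x t + u x t * pdx h x t) := by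
    rw [heqh x t, hprod]
  -- LHS quotient rule
  have lhs : pdt (fun x t => f x t / h x t) x t
      = (pdt f x t * h x t - f x t * pdt h x t) / (h x t)^2 := by
    simp only [pdt]
    rw [deriv_fun_div dft dht (hne x t)]
  -- RHS
  have rhs : pdx (fun x t => u x t * f x t / h x t) x t
      = ((pdx u x t * f x t + u x t * pdx f x t) * h x t
          - u x t * f x t * pdx h x t) / (h x t)^2 := by
    simp only [pdx]
    rw [deriv_fun_div (dux.fun_mul dfx) dhx (hne x t), deriv_fun_mul dux dfx]
  rw [lhs, rhs, heqf x t, hht]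
  field_simp
  ring
end

section
/- Let u, v, z be smooth 2π-periodic-in-x solutions of u_t = v - u u_x, v_t = z - u v_x, z_t = - u z_x. Then H := ∫₀^{2π} (u_x v - z) dx is conserved: dH/dt = 0. -/
open Real

section aux

variable {f : ℝ → ℝ → ℝ}

lemma hasDerivAt_pdx (hf : ContDiff ℝ (⊤ : ℕ∞) (Function.uncurry f)) (x t : ℝ) :
    HasDerivAt (fun y => f y t) (pdx f x t) x := by
  have h : DifferentiableAt ℝ (fun y => f y t) x := by
    have : (fun y => f y t) = (Function.uncurry f) ∘ (fun y => (y, t)) := rfl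
    rw [this]
    exact ((hf.differentiable (by simp)).comp
      (differentiable_id.prodMk (differentiable_const t))).differentiableAt
  exact h.hasDerivAt

lemma hasDerivAt_pdt (hf : ContDiff ℝ (⊤ : ℕ∞) (Function.uncurry f)) (x t : ℝ) :
    HasDerivAt (fun s => f x s) (pdt f x t) t := by
  have h : DifferentiableAt ℝ (fun s => f x s) t := by
    have : (fun s => f x s) = (Function.uncurry f) ∘ (fun s => (x, s)) := rfl
    rw [this]
    exact ((hf.differentiable (by simp)).comp
      ((differentiable_const x).prodMk differentiable_id)).differentiableAt
  exact h.hasDerivAt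

lemma pdx_eq_fderiv (hf : ContDiff ℝ (⊤ : ℕ∞) (Function.uncurry f)) (x t : ℝ) :
    pdx f x t = fderiv ℝ (Function.uncurry f) (x, t) ((1:ℝ), (0:ℝ)) := by
  have hD : HasFDerivAt (Function.uncurry f) (fderiv ℝ (Function.uncurry f) (x, t)) (x, t) :=
    (hf.differentiable (by simp) (x, t)).hasFDerivAt
  have hline : HasDerivAt (fun y : ℝ => (y, t)) ((1:ℝ), (0:ℝ)) x :=
    (hasDerivAt_id x).prodMk (hasDerivAt_const x t)
  have := hD.comp_hasDerivAt x hline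
  exact this.deriv.symm ▸ rfl

lemma pdt_eq_fderiv (hf : ContDiff ℝ (⊤ : ℕ∞) (Function.uncurry f)) (x t : ℝ) :
    pdt f x t = fderiv ℝ (Function.uncurry f) (x, t) ((0:ℝ), (1:ℝ)) := by
  have hD : HasFDerivAt (Function.uncurry f) (fderiv ℝ (Function.uncurry f) (x, t)) (x, t) :=
    (hf.differentiable (by simp) (x, t)).hasFDerivAt
  have hline : HasDerivAt (fun s : ℝ => (x, s)) ((0:ℝ), (1:ℝ)) t :=
    (hasDerivAt_const t x).prodMk (hasDerivAt_id t)
  have := hD.comp_hasDerivAt t hline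
  exact this.deriv.symm ▸ rfl

lemma contDiff_pdx (hf : ContDiff ℝ (⊤ : ℕ∞) (Function.uncurry f)) :
    ContDiff ℝ (⊤ : ℕ∞) (Function.uncurry (pdx f)) := by
  have : Function.uncurry (pdx f)
      = fun p : ℝ × ℝ => fderiv ℝ (Function.uncurry f) p ((1:ℝ), (0:ℝ)) := by
    funext p
    exact pdx_eq_fderiv hf p.1 p.2
  rw [this]
  exact (hf.fderiv_right (by simp)).clm_apply contDiff_const

lemma contDiff_pdt (hf : ContDiff ℝ (⊤ : ℕ∞) (Function.uncurry f)) :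
    ContDiff ℝ (⊤ : ℕ∞) (Function.uncurry (pdt f)) := by
  have : Function.uncurry (pdt f)
      = fun p : ℝ × ℝ => fderiv ℝ (Function.uncurry f) p ((0:ℝ), (1:ℝ)) := by
    funext p
    exact pdt_eq_fderiv hf p.1 p.2
  rw [this]
  exact (hf.fderiv_right (by simp)).clm_apply contDiff_const

lemma clairaut (hf : ContDiff ℝ (⊤ : ℕ∞) (Function.uncurry f)) (x t : ℝ) :
    pdt (pdx f) x t = pdx (pdt f) x t := by
  set F := Function.uncurry f with hF
  set f' := fderiv ℝ F with hf'
  have hdiff' : ContDiff ℝ (⊤ : ℕ∞) f' := hf.fderiv_right (by simp)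
  set f'' := fderiv ℝ f' (x, t) with hf''
  have hD' : HasFDerivAt f' f'' (x, t) := (hdiff'.differentiable (by simp) (x, t)).hasFDerivAt
  have hsym : ∀ vv ww, f'' vv ww = f'' ww vv :=
    second_derivative_symmetric (fun y => (hf.differentiable (by simp) y).hasFDerivAt) hD'
  -- pdt (pdx f) x t = f'' (0,1) (1,0)
  have h1 : pdt (pdx f) x t = f'' ((0:ℝ), (1:ℝ)) ((1:ℝ), (0:ℝ)) := by
    have heval : HasFDerivAt (fun p : ℝ × ℝ => f' p ((1:ℝ), (0:ℝ)))
        ((ContinuousLinearMap.apply ℝ ℝ ((1:ℝ), (0:ℝ))).comp f'') (x, t) :=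
      (ContinuousLinearMap.apply ℝ ℝ ((1:ℝ), (0:ℝ))).hasFDerivAt.comp (x, t) hD'
    have hline : HasDerivAt (fun s : ℝ => (x, s)) ((0:ℝ), (1:ℝ)) t :=
      (hasDerivAt_const t x).prodMk (hasDerivAt_id t)
    have hcomp := heval.comp_hasDerivAt t hline
    simp only [Function.comp_def] at hcomp
    have hfun : (fun s : ℝ => f' (x, s) ((1:ℝ), (0:ℝ))) = fun s => pdx f x s := by
      funext s; exact (pdx_eq_fderiv hf x s).symm
    rw [hfun] at hcomp
    have := hcomp.deriv
    simpa [pdt] using this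
  have h2 : pdx (pdt f) x t = f'' ((1:ℝ), (0:ℝ)) ((0:ℝ), (1:ℝ)) := by
    have heval : HasFDerivAt (fun p : ℝ × ℝ => f' p ((0:ℝ), (1:ℝ)))
        ((ContinuousLinearMap.apply ℝ ℝ ((0:ℝ), (1:ℝ))).comp f'') (x, t) :=
      (ContinuousLinearMap.apply ℝ ℝ ((0:ℝ), (1:ℝ))).hasFDerivAt.comp (x, t) hD'
    have hline : HasDerivAt (fun y : ℝ => (y, t)) ((1:ℝ), (0:ℝ)) x :=
      (hasDerivAt_id x).prodMk (hasDerivAt_const x t)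
    have hcomp := heval.comp_hasDerivAt x hline
    simp only [Function.comp_def] at hcomp
    have hfun : (fun y : ℝ => f' (y, t) ((0:ℝ), (1:ℝ))) = fun y => pdt f y t := by
      funext y; exact (pdt_eq_fderiv hf y t).symm
    rw [hfun] at hcomp
    have := hcomp.deriv
    simpa [pdx] using this
  rw [h1, h2, hsym]

lemma periodic_pdx {c : ℝ} (hper : ∀ t, Function.Periodic (fun x => f x t) c) (t : ℝ) :
    Function.Periodic (fun x => pdx f x t) c := by
  intro x
  simp only [pdx]
  have : (fun y => f y t) = fun y => (fun y => f y t) (y + c) := by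
    funext y; exact (hper t y).symm
  conv_lhs => rw [show x + c = x + c from rfl]
  calc deriv (fun y => f y t) (x + c)
      = deriv (fun y => f (y + c) t) x := (deriv_comp_add_const (fun y => f y t) c x).symm
    _ = deriv (fun y => f y t) x := by
        congr 1
        funext y
        exact hper t y

end aux

theorem statement4
    (u v z : ℝ → ℝ → ℝ)
    (hu : ContDiff ℝ (⊤ : ℕ∞) (Function.uncurry u))
    (hv : ContDiff ℝ (⊤ : ℕ∞) (Function.uncurry v))
    (hz : ContDiff ℝ (⊤ : ℕ∞) (Function.uncurry z))
    (hup : ∀ t, Function.Periodic (fun x => u x t) (2 * Real.pi))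
    (hvp : ∀ t, Function.Periodic (fun x => v x t) (2 * Real.pi))
    (hzp : ∀ t, Function.Periodic (fun x => z x t) (2 * Real.pi))
    (heq1 : ∀ x t, pdt u x t = v x t - u x t * pdx u x t)
    (heq2 : ∀ x t, pdt v x t = z x t - u x t * pdx v x t)
    (heq3 : ∀ x t, pdt z x t = - u x t * pdx z x t) :
    ∀ t, deriv (fun s => ∫ x in (0:ℝ)..(2 * Real.pi),
      (pdx u x s * v x s - z x s)) t = 0 := by
  intro t₀
  have hux : ContDiff ℝ (⊤ : ℕ∞) (Function.uncurry (pdx u)) := contDiff_pdx hu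
  have huxx : ContDiff ℝ (⊤ : ℕ∞) (Function.uncurry (pdx (pdx u))) := contDiff_pdx hux
  have hvx : ContDiff ℝ (⊤ : ℕ∞) (Function.uncurry (pdx v)) := contDiff_pdx hv
  have hzx : ContDiff ℝ (⊤ : ℕ∞) (Function.uncurry (pdx z)) := contDiff_pdx hz
  -- the closed-form time derivative of the integrand
  set G : ℝ → ℝ → ℝ := fun x s =>
    (pdx v x s - pdx u x s * pdx u x s - u x s * pdx (pdx u) x s) * v x s
      + pdx u x s * (z x s - u x s * pdx v x s) + u x s * pdx z x s with hG
  -- Clairaut computation : pdt (pdx u) = pdx v - (pdx u)^2 - u * pdx (pdx u)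
  have hmix : ∀ x s, pdt (pdx u) x s
      = pdx v x s - pdx u x s * pdx u x s - u x s * pdx (pdx u) x s := by
    intro x s
    rw [clairaut hu x s]
    have hfun : (fun y => pdt u y s) = fun y => v y s - u y s * pdx u y s := by
      funext y; exact heq1 y s
    have hd : HasDerivAt (fun y => v y s - u y s * pdx u y s)
        (pdx v x s - (pdx u x s * pdx u x s + u x s * pdx (pdx u) x s)) x :=
      (hasDerivAt_pdx hv x s).sub
        (((hasDerivAt_pdx hu x s).mul (hasDerivAt_pdx hux x s)).congr_deriv (by ring))
    have : pdx (pdt u) x s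
        = pdx v x s - (pdx u x s * pdx u x s + u x s * pdx (pdx u) x s) := by
      show deriv (fun y => pdt u y s) x = _
      rw [hfun]; exact hd.deriv
    rw [this]; ring
  -- time derivative of the integrand
  have hGt : ∀ x s, HasDerivAt (fun s' => pdx u x s' * v x s' - z x s') (G x s) s := by
    intro x s
    have hd : HasDerivAt (fun s' => pdx u x s' * v x s' - z x s')
        (pdt (pdx u) x s * v x s + pdx u x s * pdt v x s - pdt z x s) s :=
      ((hasDerivAt_pdt hux x s).mul (hasDerivAt_pdt hv x s)).sub (hasDerivAt_pdt hz x s)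
    refine hd.congr_deriv ?_
    rw [hmix x s, heq2 x s, heq3 x s, hG]; ring
  -- the antiderivative in x
  set FF : ℝ → ℝ → ℝ := fun y s =>
    v y s * v y s / 2 - u y s * pdx u y s * v y s + u y s * z y s with hFF
  have hGx : ∀ x, HasDerivAt (fun y => FF y t₀) (G x t₀) x := by
    intro x
    have hd := ((((hasDerivAt_pdx hv x t₀).mul (hasDerivAt_pdx hv x t₀)).div_const 2).sub
        (((hasDerivAt_pdx hu x t₀).mul (hasDerivAt_pdx hux x t₀)).mul
          (hasDerivAt_pdx hv x t₀))).add
        ((hasDerivAt_pdx hu x t₀).mul (hasDerivAt_pdx hz x t₀))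
    refine HasDerivAt.congr_deriv hd ?_
    rw [hG]; simp only [Pi.mul_apply]; ring
  -- continuity facts
  have cu : Continuous (Function.uncurry u) := hu.continuous
  have cv : Continuous (Function.uncurry v) := hv.continuous
  have cz : Continuous (Function.uncurry z) := hz.continuous
  have cux : Continuous (Function.uncurry (pdx u)) := hux.continuous
  have cuxx : Continuous (Function.uncurry (pdx (pdx u))) := huxx.continuous
  have cvx : Continuous (Function.uncurry (pdx v)) := hvx.continuous
  have czx : Continuous (Function.uncurry (pdx z)) := hzx.continuous
  have cg : Continuous (fun p : ℝ × ℝ => pdx u p.1 p.2 * v p.1 p.2 - z p.1 p.2) :=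
    (cux.mul cv).sub cz
  have cG : Continuous (fun p : ℝ × ℝ => G p.1 p.2) := by
    rw [hG]
    exact (((cvx.sub (cux.mul cux)).sub (cu.mul cuxx)).mul cv).add
      ((cux.mul (cz.sub (cu.mul cvx)))) |>.add (cu.mul czx)
  -- bound on the compact set
  set K : Set (ℝ × ℝ) := Set.uIcc (0:ℝ) (2 * π) ×ˢ Metric.closedBall t₀ 1 with hK
  have hKc : IsCompact K := isCompact_uIcc.prod (isCompact_closedBall _ _)
  obtain ⟨C, hC⟩ := hKc.exists_bound_of_continuousOn cG.continuousOn
  -- differentiation under the integral sign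
  have key := intervalIntegral.hasDerivAt_integral_of_dominated_loc_of_deriv_le
    (F := fun s x => pdx u x s * v x s - z x s) (F' := fun s x => G x s)
    (x₀ := t₀) (a := (0:ℝ)) (b := 2 * π) (bound := fun _ => C) (s := Metric.ball t₀ 1) (μ := MeasureTheory.volume)
    (Metric.ball_mem_nhds t₀ one_pos)
    (Filter.Eventually.of_forall fun s =>
      ((cg.comp (continuous_id.prodMk continuous_const)).aestronglyMeasurable))
    ((cg.comp (continuous_id.prodMk continuous_const)).intervalIntegrable _ _)
    ((cG.comp (continuous_id.prodMk continuous_const)).aestronglyMeasurable)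
    (Filter.Eventually.of_forall fun x hx => fun s hs => by
      have hmem : (x, s) ∈ K := by
        refine Set.mk_mem_prod ?_ (Metric.ball_subset_closedBall hs)
        exact Set.uIoc_subset_uIcc hx
      simpa using hC (x, s) hmem)
    (intervalIntegrable_const)
    (Filter.Eventually.of_forall fun x hx => fun s hs => hGt x s)
  have hderiv := key.2
  rw [hderiv.deriv]
  -- compute the space integral by the FTC and periodicity
  have hFTC : ∫ x in (0:ℝ)..(2 * π), G x t₀ = FF (2 * π) t₀ - FF 0 t₀ := by
    refine intervalIntegral.integral_eq_sub_of_hasDerivAt (fun x _ => hGx x) ?_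
    exact ((cG.comp (continuous_id.prodMk continuous_const)).intervalIntegrable _ _)
  rw [hFTC]
  have h1 : u (2 * π) t₀ = u 0 t₀ := by simpa using hup t₀ 0
  have h2 : v (2 * π) t₀ = v 0 t₀ := by simpa using hvp t₀ 0
  have h3 : z (2 * π) t₀ = z 0 t₀ := by simpa using hzp t₀ 0
  have h4 : pdx u (2 * π) t₀ = pdx u 0 t₀ := by simpa using periodic_pdx hup t₀ 0
  rw [hFF]
  simp only [h1, h2, h3, h4]
  ring
end

section
/- Let u, v be smooth 2π-periodic-in-x solutions of u_t = 2 u u_x - v, v_t = 2 u v_x. Then Ĥ_θ := ∫₀^{2π} (v²/2 + v_x u²) dx is conserved in time. -/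
open Real

open Function MeasureTheory Metric Set intervalIntegral

/-- x-direction derivative of a two-variable function. -/
lemma aux_hasDerivAt_x {F : ℝ × ℝ → ℝ} {x t : ℝ} (hF : DifferentiableAt ℝ F (x, t)) :
    HasDerivAt (fun y => F (y, t)) (fderiv ℝ F (x, t) (1, 0)) x :=
  hF.hasFDerivAt.comp_hasDerivAt x ((hasDerivAt_id x).prodMk (hasDerivAt_const x t))

/-- t-direction derivative of a two-variable function. -/
lemma aux_hasDerivAt_t {F : ℝ × ℝ → ℝ} {x t : ℝ} (hF : DifferentiableAt ℝ F (x, t)) :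
    HasDerivAt (fun s => F (x, s)) (fderiv ℝ F (x, t) (0, 1)) t :=
  hF.hasFDerivAt.comp_hasDerivAt t ((hasDerivAt_const t x).prodMk (hasDerivAt_id t))

/-- Schwarz symmetry packaged for coordinate vectors. -/
lemma aux_schwarz {F : ℝ × ℝ → ℝ} (hF : ContDiff ℝ (⊤ : ℕ∞) F) (p : ℝ × ℝ) :
    fderiv ℝ (fun q => fderiv ℝ F q (1, 0)) p (0, 1) =
    fderiv ℝ (fun q => fderiv ℝ F q (0, 1)) p (1, 0) := by
  have hdF : ContDiff ℝ 1 (fderiv ℝ F) := hF.fderiv_right (WithTop.coe_le_coe.mpr le_top)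
  have hdFd : DifferentiableAt ℝ (fderiv ℝ F) p := (hdF.differentiable one_ne_zero) p
  have hsym := second_derivative_symmetric
      (f := F) (f' := fderiv ℝ F) (f'' := fderiv ℝ (fderiv ℝ F) p) (x := p)
      (fun y => ((hF.differentiable (by simp)) y).hasFDerivAt) hdFd.hasFDerivAt
      ((0 : ℝ), (1 : ℝ)) ((1 : ℝ), (0 : ℝ))
  have h1 : fderiv ℝ (fun q => fderiv ℝ F q (1, 0)) p (0, 1) =
      fderiv ℝ (fderiv ℝ F) p (0, 1) (1, 0) := by
    rw [fderiv_clm_apply hdFd (differentiableAt_const _)]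
    simp
  have h2 : fderiv ℝ (fun q => fderiv ℝ F q (0, 1)) p (1, 0) =
      fderiv ℝ (fderiv ℝ F) p (1, 0) (0, 1) := by
    rw [fderiv_clm_apply hdFd (differentiableAt_const _)]
    simp
  rw [h1, h2, hsym]

theorem statement10
    (u v : ℝ → ℝ → ℝ)
    (hu : ContDiff ℝ (⊤ : ℕ∞) (Function.uncurry u))
    (hv : ContDiff ℝ (⊤ : ℕ∞) (Function.uncurry v))
    (hup : ∀ t, Function.Periodic (fun x => u x t) (2 * Real.pi))
    (hvp : ∀ t, Function.Periodic (fun x => v x t) (2 * Real.pi))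
    (heq1 : ∀ x t, pdt u x t = 2 * u x t * pdx u x t - v x t)
    (heq2 : ∀ x t, pdt v x t = 2 * u x t * pdx v x t) :
    ∀ t, deriv (fun s => ∫ x in (0:ℝ)..(2 * Real.pi),
      ((v x s) ^ 2 / 2 + pdx v x s * (u x s) ^ 2)) t = 0 := by
  intro t
  set V : ℝ × ℝ → ℝ := Function.uncurry v with hV
  set U : ℝ × ℝ → ℝ := Function.uncurry u with hU
  -- partial derivative functions
  set D1V : ℝ × ℝ → ℝ := fun p => fderiv ℝ V p (1, 0) with hD1Vdef
  set D2V : ℝ × ℝ → ℝ := fun p => fderiv ℝ V p (0, 1) with hD2Vdef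
  set D1U : ℝ × ℝ → ℝ := fun p => fderiv ℝ U p (1, 0) with hD1Udef
  have hVdiff : Differentiable ℝ V := hv.differentiable (by simp)
  have hUdiff : Differentiable ℝ U := hu.differentiable (by simp)
  have hD1V : ContDiff ℝ 2 D1V := (hv.fderiv_right (WithTop.coe_le_coe.mpr le_top)).clm_apply contDiff_const
  have hD2V : ContDiff ℝ 2 D2V := (hv.fderiv_right (WithTop.coe_le_coe.mpr le_top)).clm_apply contDiff_const
  have hD1U : ContDiff ℝ 2 D1U := (hu.fderiv_right (WithTop.coe_le_coe.mpr le_top)).clm_apply contDiff_const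
  have hV2 : ContDiff ℝ 2 V := hv.of_le (WithTop.coe_le_coe.mpr le_top)
  have hU2 : ContDiff ℝ 2 U := hu.of_le (WithTop.coe_le_coe.mpr le_top)
  -- identify pdx / pdt with the fderiv expressions
  have hpdxv : ∀ x s, pdx v x s = D1V (x, s) := fun x s =>
    (aux_hasDerivAt_x (hVdiff (x, s))).deriv
  have hpdtv : ∀ x s, pdt v x s = D2V (x, s) := fun x s =>
    (aux_hasDerivAt_t (hVdiff (x, s))).deriv
  have hpdxu : ∀ x s, pdx u x s = D1U (x, s) := fun x s =>
    (aux_hasDerivAt_x (hUdiff (x, s))).deriv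
  have hpdtu : ∀ x s, pdt u x s = fderiv ℝ U (x, s) (0, 1) := fun x s =>
    (aux_hasDerivAt_t (hUdiff (x, s))).deriv
  -- the integrand and the flux
  set F : ℝ × ℝ → ℝ := fun p => V p ^ 2 / 2 + D1V p * U p ^ 2 with hFdef
  set G : ℝ × ℝ → ℝ := fun p => 2 * U p ^ 3 * D1V p with hGdef
  have hF : ContDiff ℝ 2 F := ((hV2.pow 2).div_const 2).add (hD1V.mul (hU2.pow 2))
  have hG : ContDiff ℝ 2 G := (contDiff_const.mul (hU2.pow 3)).mul hD1V
  have hFdiff : Differentiable ℝ F := hF.differentiable two_ne_zero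
  have hGdiff : Differentiable ℝ G := hG.differentiable two_ne_zero
  -- key pointwise identity: ∂ₜ F = ∂ₓ G
  have key : ∀ x s, fderiv ℝ F (x, s) (0, 1) = fderiv ℝ G (x, s) (1, 0) := by
    intro x s
    have hd1vdiff : Differentiable ℝ D1V := hD1V.differentiable two_ne_zero
    set B : ℝ := fderiv ℝ D1V (x, s) (1, 0) with hBdef
    -- derivative of D1V in time, via Schwarz
    have hA : fderiv ℝ D1V (x, s) (0, 1) =
        2 * D1U (x, s) * D1V (x, s) + 2 * U (x, s) * B := by
      have h1 : fderiv ℝ D1V (x, s) (0, 1) = fderiv ℝ D2V (x, s) (1, 0) :=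
        aux_schwarz hv (x, s)
      have h2 : (fun y => D2V (y, s)) = fun y => 2 * U (y, s) * D1V (y, s) := by
        funext y
        rw [← hpdtv y s, heq2 y s, hpdxv y s]
        rfl
      have h3 : HasDerivAt (fun y => 2 * U (y, s) * D1V (y, s))
          (2 * D1U (x, s) * D1V (x, s) + 2 * U (x, s) * B) x := by
        have hu' : HasDerivAt (fun y => U (y, s)) (D1U (x, s)) x :=
          aux_hasDerivAt_x (hUdiff (x, s))
        have hv' : HasDerivAt (fun y => D1V (y, s)) B x :=
          aux_hasDerivAt_x (hd1vdiff (x, s))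
        exact (hu'.const_mul 2).mul hv'
      have h4 : HasDerivAt (fun y => D2V (y, s)) (fderiv ℝ D2V (x, s) (1, 0)) x :=
        aux_hasDerivAt_x ((hD2V.differentiable two_ne_zero) (x, s))
      rw [h2] at h4
      rw [h1, h4.unique h3]
    -- compute ∂ₜ F
    have hFt : HasDerivAt (fun s' => F (x, s'))
        (2 * V (x, s) ^ 1 * D2V (x, s) / 2 +
          ((2 * D1U (x, s) * D1V (x, s) + 2 * U (x, s) * B) * U (x, s) ^ 2 +
            D1V (x, s) * (2 * U (x, s) ^ 1 * fderiv ℝ U (x, s) (0, 1)))) s := by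
      have hv' : HasDerivAt (fun s' => V (x, s')) (D2V (x, s)) s :=
        aux_hasDerivAt_t (hVdiff (x, s))
      have hvx' : HasDerivAt (fun s' => D1V (x, s')) (fderiv ℝ D1V (x, s) (0, 1)) s :=
        aux_hasDerivAt_t (hd1vdiff (x, s))
      rw [hA] at hvx'
      have hu' : HasDerivAt (fun s' => U (x, s')) (fderiv ℝ U (x, s) (0, 1)) s :=
        aux_hasDerivAt_t (hUdiff (x, s))
      exact ((hv'.pow 2).div_const 2).add (hvx'.mul (hu'.pow 2))
    -- compute ∂ₓ G
    have hGx : HasDerivAt (fun y => G (y, s))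
        (2 * (3 * U (x, s) ^ 2 * D1U (x, s)) * D1V (x, s) + 2 * U (x, s) ^ 3 * B) x := by
      have hu' : HasDerivAt (fun y => U (y, s)) (D1U (x, s)) x :=
        aux_hasDerivAt_x (hUdiff (x, s))
      have hv' : HasDerivAt (fun y => D1V (y, s)) B x :=
        aux_hasDerivAt_x (hd1vdiff (x, s))
      exact ((hu'.pow 3).const_mul 2).mul hv'
    have hF' : HasDerivAt (fun s' => F (x, s')) (fderiv ℝ F (x, s) (0, 1)) s :=
      aux_hasDerivAt_t (hFdiff (x, s))
    have hG' : HasDerivAt (fun y => G (y, s)) (fderiv ℝ G (x, s) (1, 0)) x :=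
      aux_hasDerivAt_x (hGdiff (x, s))
    rw [hF'.unique hFt, hG'.unique hGx]
    -- substitute the PDE
    have e2 : D2V (x, s) = 2 * U (x, s) * D1V (x, s) := by
      rw [← hpdtv x s, heq2 x s, hpdxv x s]; rfl
    have e1 : fderiv ℝ U (x, s) (0, 1) = 2 * U (x, s) * D1U (x, s) - V (x, s) := by
      rw [← hpdtu x s, heq1 x s, hpdxu x s]; rfl
    rw [e2, e1]
    ring
  -- continuity of the t-partial of F
  have hFt_cont : Continuous fun p : ℝ × ℝ => fderiv ℝ F p (0, 1) :=
    ((hF.fderiv_right (m := 1) (by norm_num)).clm_apply contDiff_const).continuous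
  -- rewrite the integrand
  have hfun : (fun s => ∫ x in (0:ℝ)..(2 * Real.pi),
      ((v x s) ^ 2 / 2 + pdx v x s * (u x s) ^ 2)) =
      fun s => ∫ x in (0:ℝ)..(2 * Real.pi), F (x, s) := by
    funext s
    congr 1
    funext x
    rw [hpdxv x s]
    rfl
  rw [hfun]
  -- a uniform bound for the t-partial on a compact neighborhood
  obtain ⟨C, hC⟩ : ∃ C, ∀ p ∈ (Icc (0:ℝ) (2 * Real.pi)) ×ˢ (Icc (t - 1) (t + 1)),
      ‖fderiv ℝ F p (0, 1)‖ ≤ C :=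
    (isCompact_Icc.prod isCompact_Icc).exists_bound_of_continuousOn
      hFt_cont.continuousOn
  have hpi : (0:ℝ) ≤ 2 * Real.pi := by positivity
  -- differentiation under the integral sign
  have hder : HasDerivAt (fun s => ∫ x in (0:ℝ)..(2 * Real.pi), F (x, s))
      (∫ x in (0:ℝ)..(2 * Real.pi), fderiv ℝ F (x, t) (0, 1)) t := by
    have H := intervalIntegral.hasDerivAt_integral_of_dominated_loc_of_deriv_le
      (F := fun s x => F (x, s)) (F' := fun s x => fderiv ℝ F (x, s) (0, 1))
      (x₀ := t) (s := ball t 1) (a := 0) (b := 2 * Real.pi) (μ := volume)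
      (bound := fun _ => C)
      (ball_mem_nhds t one_pos)
      (Filter.Eventually.of_forall fun s =>
        ((hF.continuous.comp (continuous_id.prodMk continuous_const)).aestronglyMeasurable))
      ((hF.continuous.comp (continuous_id.prodMk continuous_const)).intervalIntegrable _ _)
      ((hFt_cont.comp (continuous_id.prodMk continuous_const)).aestronglyMeasurable)
      ?_ (intervalIntegrable_const) ?_
    · exact H.2
    · refine Filter.Eventually.of_forall fun x hx s hs => ?_
      refine hC (x, s) ⟨?_, ?_⟩
      · rw [uIoc_of_le hpi] at hx
        exact ⟨le_of_lt hx.1, hx.2⟩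
      · rw [mem_ball, Real.dist_eq, abs_lt] at hs
        constructor <;> linarith [hs.1, hs.2]
    · exact Filter.Eventually.of_forall fun x _ s _ => aux_hasDerivAt_t (hFdiff (x, s))
  rw [hder.deriv]
  -- the integral of ∂ₓ G over a period vanishes
  have hGx_cont : Continuous fun p : ℝ × ℝ => fderiv ℝ G p (1, 0) :=
    ((hG.fderiv_right (m := 1) (by norm_num)).clm_apply contDiff_const).continuous
  have hint : ∫ x in (0:ℝ)..(2 * Real.pi), fderiv ℝ F (x, t) (0, 1) =
      ∫ x in (0:ℝ)..(2 * Real.pi), fderiv ℝ G (x, t) (1, 0) := by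
    congr 1
    funext x
    exact key x t
  rw [hint]
  have hftc : ∫ x in (0:ℝ)..(2 * Real.pi), fderiv ℝ G (x, t) (1, 0) =
      G (2 * Real.pi, t) - G (0, t) := by
    apply intervalIntegral.integral_eq_sub_of_hasDerivAt
      (f := fun y => G (y, t)) (f' := fun x => fderiv ℝ G (x, t) (1, 0))
    · exact fun x _ => aux_hasDerivAt_x (hGdiff (x, t))
    · exact (hGx_cont.comp (continuous_id.prodMk continuous_const)).intervalIntegrable _ _
  rw [hftc]
  -- periodicity
  have hGper : G (2 * Real.pi, t) = G (0, t) := by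
    have h1 : U (2 * Real.pi, t) = U (0, t) := by
      have := hup t 0
      simpa [hU] using this
    have h2 : D1V (2 * Real.pi, t) = D1V (0, t) := by
      rw [← hpdxv (2 * Real.pi) t, ← hpdxv 0 t]
      have hfun2 : (fun y => v (y + 2 * Real.pi) t) = fun y => v y t :=
        funext fun y => hvp t y
      calc pdx v (2 * Real.pi) t = deriv (fun x => v x t) (0 + 2 * Real.pi) := by
            rw [zero_add]; rfl
        _ = deriv (fun y => v (y + 2 * Real.pi) t) 0 :=
            (deriv_comp_add_const _ _ _).symm
        _ = pdx v 0 t := by rw [hfun2]; rfl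
    simp only [hGdef, h1, h2]
  rw [hGper, sub_self]
end

section
/- Let u, v be smooth 2π-periodic-in-x solutions of u_t = 2 u u_x - v, v_t = 2 u v_x, with u_x² - v_x > 0 everywhere. Then γ̂_{-1} := ∫₀^{2π} √(u_x² - v_x) dx is conserved in time. -/
open Real

section Aux

private lemma sliceX {g : ℝ × ℝ → ℝ} {x t : ℝ} (hg : DifferentiableAt ℝ g (x, t)) :
    HasDerivAt (fun y => g (y, t)) (fderiv ℝ g (x, t) (1, 0)) x := by
  have h2 : HasDerivAt (fun y : ℝ => (y, t)) ((1 : ℝ), (0 : ℝ)) x :=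
    (hasDerivAt_id x).prodMk (hasDerivAt_const x t)
  exact hg.hasFDerivAt.comp_hasDerivAt x h2

private lemma sliceT {g : ℝ × ℝ → ℝ} {x t : ℝ} (hg : DifferentiableAt ℝ g (x, t)) :
    HasDerivAt (fun s => g (x, s)) (fderiv ℝ g (x, t) (0, 1)) t := by
  have h2 : HasDerivAt (fun s : ℝ => (x, s)) ((0 : ℝ), (1 : ℝ)) t :=
    (hasDerivAt_const t x).prodMk (hasDerivAt_id t)
  exact hg.hasFDerivAt.comp_hasDerivAt t h2

private lemma pdx_eq {f : ℝ → ℝ → ℝ} (hf : Differentiable ℝ (Function.uncurry f)) (x s : ℝ) :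
    pdx f x s = fderiv ℝ (Function.uncurry f) (x, s) (1, 0) :=
  (sliceX (hf (x, s))).deriv

private lemma pdt_eq {f : ℝ → ℝ → ℝ} (hf : Differentiable ℝ (Function.uncurry f)) (x s : ℝ) :
    pdt f x s = fderiv ℝ (Function.uncurry f) (x, s) (0, 1) :=
  (sliceT (hf (x, s))).deriv

private lemma contDiff_fderiv_apply {F : ℝ × ℝ → ℝ} (hF : ContDiff ℝ (⊤ : ℕ∞) F) (e : ℝ × ℝ) :
    ContDiff ℝ 2 (fun p => fderiv ℝ F p e) :=
  ((hF.of_le (WithTop.coe_le_coe.mpr le_top) : ContDiff ℝ 3 F).fderiv_right (by norm_num)).clm_apply contDiff_const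

private lemma key_swap {F : ℝ × ℝ → ℝ} (hF : ContDiff ℝ (⊤ : ℕ∞) F) (p a b : ℝ × ℝ) :
    fderiv ℝ (fun q => fderiv ℝ F q a) p b = fderiv ℝ (fun q => fderiv ℝ F q b) p a := by
  have hd : DifferentiableAt ℝ (fderiv ℝ F) p :=
    (((hF.of_le (WithTop.coe_le_coe.mpr le_top) : ContDiff ℝ 2 F).fderiv_right (m := 1) (by norm_num)).differentiable
      one_ne_zero) p
  have h1 : ∀ c : ℝ × ℝ, fderiv ℝ (fun q => fderiv ℝ F q c) p
      = (ContinuousLinearMap.apply ℝ ℝ c).comp (fderiv ℝ (fderiv ℝ F) p) := fun c =>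
    (((ContinuousLinearMap.apply ℝ ℝ c).hasFDerivAt.comp p hd.hasFDerivAt) :
      HasFDerivAt (fun q => fderiv ℝ F q c) _ p).fderiv
  rw [h1 a, h1 b]
  simp only [ContinuousLinearMap.coe_comp', Function.comp_apply,
    ContinuousLinearMap.apply_apply]
  exact (hF.contDiffAt.isSymmSndFDerivAt (by simp; exact WithTop.coe_le_coe.mpr le_top)) b a

/-- The quantity `u_x ^ 2 - v_x` as a function on the plane. -/
private noncomputable def AA (u v : ℝ → ℝ → ℝ) : ℝ × ℝ → ℝ := fun p =>
  (fderiv ℝ (Function.uncurry u) p (1, 0)) ^ 2 - fderiv ℝ (Function.uncurry v) p (1, 0)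

/-- The integrand `sqrt (u_x ^ 2 - v_x)` as a function on the plane. -/
private noncomputable def WW (u v : ℝ → ℝ → ℝ) : ℝ × ℝ → ℝ := fun p => Real.sqrt (AA u v p)

private lemma core
    (u v : ℝ → ℝ → ℝ)
    (hu : ContDiff ℝ (⊤ : ℕ∞) (Function.uncurry u))
    (hv : ContDiff ℝ (⊤ : ℕ∞) (Function.uncurry v))
    (heq1 : ∀ x t, pdt u x t = 2 * u x t * pdx u x t - v x t)
    (heq2 : ∀ x t, pdt v x t = 2 * u x t * pdx v x t)
    (hpos : ∀ x t, (pdx u x t) ^ 2 - pdx v x t > 0)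
    (x s : ℝ) :
    HasDerivAt (fun r => WW u v (x, r))
      (fderiv ℝ (fun p => 2 * Function.uncurry u p * WW u v p) (x, s) (1, 0)) s := by
  have hud : Differentiable ℝ (Function.uncurry u) := hu.differentiable (by simp)
  have hvd : Differentiable ℝ (Function.uncurry v) := hv.differentiable (by simp)
  have hguc := contDiff_fderiv_apply hu (1, 0)
  have hgvc := contDiff_fderiv_apply hv (1, 0)
  have hgtuc := contDiff_fderiv_apply hu (0, 1)
  have hgtvc := contDiff_fderiv_apply hv (0, 1)
  have hgud := hguc.differentiable two_ne_zero
  have hgvd := hgvc.differentiable two_ne_zero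
  have hAc : ContDiff ℝ 2 (AA u v) := (hguc.pow 2).sub hgvc
  have hAd := hAc.differentiable two_ne_zero
  have hApos : ∀ p : ℝ × ℝ, 0 < AA u v p := fun p => by
    have h := hpos p.1 p.2
    rwa [pdx_eq hud, pdx_eq hvd] at h
  have hWd : Differentiable ℝ (WW u v) := fun p =>
    ((Real.contDiffAt_sqrt (n := 2) (hApos p).ne').comp p hAc.contDiffAt).differentiableAt
      two_ne_zero
  -- the PDE in terms of fderiv
  have hpde1 : ∀ y r, fderiv ℝ (Function.uncurry u) (y, r) (0, 1)
      = 2 * u y r * fderiv ℝ (Function.uncurry u) (y, r) (1, 0) - v y r := fun y r => by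
    have h := heq1 y r
    rwa [pdt_eq hud, pdx_eq hud] at h
  have hpde2 : ∀ y r, fderiv ℝ (Function.uncurry v) (y, r) (0, 1)
      = 2 * u y r * fderiv ℝ (Function.uncurry v) (y, r) (1, 0) := fun y r => by
    have h := heq2 y r
    rwa [pdt_eq hvd, pdx_eq hvd] at h
  -- slice derivatives in the x direction
  have hsu := sliceX (hud (x, s))
  have hsv := sliceX (hvd (x, s))
  have hsgu := sliceX (hgud (x, s))
  have hsgv := sliceX (hgvd (x, s))
  -- mixed partials via the PDE
  have hmix1 : fderiv ℝ (fun p => fderiv ℝ (Function.uncurry u) p (1, 0)) (x, s) (0, 1)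
      = 2 * (fderiv ℝ (Function.uncurry u) (x, s) (1, 0)
            * fderiv ℝ (Function.uncurry u) (x, s) (1, 0)
          + u x s * fderiv ℝ (fun p => fderiv ℝ (Function.uncurry u) p (1, 0)) (x, s) (1, 0))
        - fderiv ℝ (Function.uncurry v) (x, s) (1, 0) := by
    rw [key_swap hu (x, s) (1, 0) (0, 1)]
    have hRHS : HasDerivAt
        (fun y => 2 * Function.uncurry u (y, s)
            * fderiv ℝ (Function.uncurry u) (y, s) (1, 0) - Function.uncurry v (y, s))
        (2 * (fderiv ℝ (Function.uncurry u) (x, s) (1, 0)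
              * fderiv ℝ (Function.uncurry u) (x, s) (1, 0)
            + u x s * fderiv ℝ (fun p => fderiv ℝ (Function.uncurry u) p (1, 0)) (x, s) (1, 0))
          - fderiv ℝ (Function.uncurry v) (x, s) (1, 0)) x := by
      have h := ((hsu.const_mul 2).fun_mul hsgu).fun_sub hsv
      refine h.congr_deriv (Eq.symm ?_)
      simp only [Function.uncurry_apply_pair]
      ring
    have hL := sliceX ((hgtuc.differentiable two_ne_zero) (x, s))
    have hL' := hRHS.congr_of_eventuallyEq
      (Filter.Eventually.of_forall fun y => hpde1 y s)
    exact hL.unique hL'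
  have hmix2 : fderiv ℝ (fun p => fderiv ℝ (Function.uncurry v) p (1, 0)) (x, s) (0, 1)
      = 2 * (fderiv ℝ (Function.uncurry u) (x, s) (1, 0)
            * fderiv ℝ (Function.uncurry v) (x, s) (1, 0)
          + u x s * fderiv ℝ (fun p => fderiv ℝ (Function.uncurry v) p (1, 0)) (x, s) (1, 0)) := by
    rw [key_swap hv (x, s) (1, 0) (0, 1)]
    have hRHS : HasDerivAt
        (fun y => 2 * Function.uncurry u (y, s)
            * fderiv ℝ (Function.uncurry v) (y, s) (1, 0))
        (2 * (fderiv ℝ (Function.uncurry u) (x, s) (1, 0)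
              * fderiv ℝ (Function.uncurry v) (x, s) (1, 0)
            + u x s * fderiv ℝ (fun p => fderiv ℝ (Function.uncurry v) p (1, 0)) (x, s) (1, 0))) x := by
      have h := (hsu.const_mul 2).fun_mul hsgv
      refine h.congr_deriv (Eq.symm ?_)
      simp only [Function.uncurry_apply_pair]
      ring
    have hL := sliceX ((hgtvc.differentiable two_ne_zero) (x, s))
    have hL' := hRHS.congr_of_eventuallyEq
      (Filter.Eventually.of_forall fun y => hpde2 y s)
    exact hL.unique hL'
  -- derivatives of A
  have hsA_t := sliceT (hAd (x, s))
  have hsA_x := sliceX (hAd (x, s))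
  have hstgu := sliceT (hgud (x, s))
  have hstgv := sliceT (hgvd (x, s))
  have hDxA : fderiv ℝ (AA u v) (x, s) (1, 0)
      = 2 * fderiv ℝ (Function.uncurry u) (x, s) (1, 0)
          * fderiv ℝ (fun p => fderiv ℝ (Function.uncurry u) p (1, 0)) (x, s) (1, 0)
        - fderiv ℝ (fun p => fderiv ℝ (Function.uncurry v) p (1, 0)) (x, s) (1, 0) := by
    have h : HasDerivAt (fun y => AA u v (y, s))
        (2 * fderiv ℝ (Function.uncurry u) (x, s) (1, 0)
          * fderiv ℝ (fun p => fderiv ℝ (Function.uncurry u) p (1, 0)) (x, s) (1, 0)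
        - fderiv ℝ (fun p => fderiv ℝ (Function.uncurry v) p (1, 0)) (x, s) (1, 0)) x := by
      have h2 := (hsgu.fun_pow 2).fun_sub hsgv
      refine h2.congr_deriv (Eq.symm ?_)
      push_cast
      ring
    exact hsA_x.unique h
  have hDtA : fderiv ℝ (AA u v) (x, s) (0, 1)
      = 2 * fderiv ℝ (Function.uncurry u) (x, s) (1, 0)
          * fderiv ℝ (fun p => fderiv ℝ (Function.uncurry u) p (1, 0)) (x, s) (0, 1)
        - fderiv ℝ (fun p => fderiv ℝ (Function.uncurry v) p (1, 0)) (x, s) (0, 1) := by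
    have h : HasDerivAt (fun r => AA u v (x, r))
        (2 * fderiv ℝ (Function.uncurry u) (x, s) (1, 0)
          * fderiv ℝ (fun p => fderiv ℝ (Function.uncurry u) p (1, 0)) (x, s) (0, 1)
        - fderiv ℝ (fun p => fderiv ℝ (Function.uncurry v) p (1, 0)) (x, s) (0, 1)) s := by
      have h2 := (hstgu.fun_pow 2).fun_sub hstgv
      refine h2.congr_deriv (Eq.symm ?_)
      push_cast
      ring
    exact hsA_t.unique h
  -- the key conservation identity
  have hkey : fderiv ℝ (AA u v) (x, s) (0, 1)
      = 4 * fderiv ℝ (Function.uncurry u) (x, s) (1, 0) * AA u v (x, s)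
        + 2 * u x s * fderiv ℝ (AA u v) (x, s) (1, 0) := by
    have hAval : AA u v (x, s)
        = (fderiv ℝ (Function.uncurry u) (x, s) (1, 0)) ^ 2
          - fderiv ℝ (Function.uncurry v) (x, s) (1, 0) := rfl
    rw [hDtA, hDxA, hmix1, hmix2, hAval]
    ring
  -- sqrt chain rule
  have hsq := Real.hasDerivAt_sqrt (hApos (x, s)).ne'
  have hWt : HasDerivAt (fun r => WW u v (x, r))
      (1 / (2 * Real.sqrt (AA u v (x, s))) * fderiv ℝ (AA u v) (x, s) (0, 1)) s :=
    hsq.comp s hsA_t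
  have hWx : HasDerivAt (fun y => WW u v (y, s))
      (1 / (2 * Real.sqrt (AA u v (x, s))) * fderiv ℝ (AA u v) (x, s) (1, 0)) x :=
    hsq.comp x hsA_x
  have hG : HasDerivAt (fun y => 2 * Function.uncurry u (y, s) * WW u v (y, s))
      (2 * (fderiv ℝ (Function.uncurry u) (x, s) (1, 0) * Real.sqrt (AA u v (x, s))
        + u x s * (1 / (2 * Real.sqrt (AA u v (x, s))) * fderiv ℝ (AA u v) (x, s) (1, 0)))) x := by
    have h := (hsu.const_mul 2).fun_mul hWx
    refine h.congr_deriv (Eq.symm ?_)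
    show _ = 2 * fderiv ℝ (Function.uncurry u) (x, s) (1, 0) * WW u v (x, s)
      + 2 * u x s * (1 / (2 * Real.sqrt (AA u v (x, s))) * fderiv ℝ (AA u v) (x, s) (1, 0))
    have : WW u v (x, s) = Real.sqrt (AA u v (x, s)) := rfl
    rw [this]; ring
  have hGdiff : DifferentiableAt ℝ (fun p => 2 * Function.uncurry u p * WW u v p) (x, s) :=
    (((hud (x, s)).const_mul 2).mul (hWd (x, s)))
  have hGval : fderiv ℝ (fun p => 2 * Function.uncurry u p * WW u v p) (x, s) (1, 0)
      = 2 * (fderiv ℝ (Function.uncurry u) (x, s) (1, 0) * Real.sqrt (AA u v (x, s))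
        + u x s * (1 / (2 * Real.sqrt (AA u v (x, s))) * fderiv ℝ (AA u v) (x, s) (1, 0))) :=
    (sliceX hGdiff).unique hG
  rw [hGval]
  have hval : 1 / (2 * Real.sqrt (AA u v (x, s))) * fderiv ℝ (AA u v) (x, s) (0, 1)
      = 2 * (fderiv ℝ (Function.uncurry u) (x, s) (1, 0) * Real.sqrt (AA u v (x, s))
        + u x s * (1 / (2 * Real.sqrt (AA u v (x, s))) * fderiv ℝ (AA u v) (x, s) (1, 0))) := by
    rw [hkey]
    have hs0 : Real.sqrt (AA u v (x, s)) ≠ 0 := (Real.sqrt_pos.mpr (hApos (x, s))).ne'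
    have hss : Real.sqrt (AA u v (x, s)) * Real.sqrt (AA u v (x, s)) = AA u v (x, s) :=
      Real.mul_self_sqrt (hApos (x, s)).le
    rw [← hss]
    field_simp
    simp only [Real.sqrt_sq, Real.sqrt_mul_self, Real.sqrt_nonneg]
    ring
  exact hval ▸ hWt

end Aux

theorem statement11
    (u v : ℝ → ℝ → ℝ)
    (hu : ContDiff ℝ (⊤ : ℕ∞) (Function.uncurry u))
    (hv : ContDiff ℝ (⊤ : ℕ∞) (Function.uncurry v))
    (hup : ∀ t, Function.Periodic (fun x => u x t) (2 * Real.pi))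
    (hvp : ∀ t, Function.Periodic (fun x => v x t) (2 * Real.pi))
    (heq1 : ∀ x t, pdt u x t = 2 * u x t * pdx u x t - v x t)
    (heq2 : ∀ x t, pdt v x t = 2 * u x t * pdx v x t)
    (hpos : ∀ x t, (pdx u x t) ^ 2 - pdx v x t > 0) :
    ∀ t, deriv (fun s => ∫ x in (0:ℝ)..(2 * Real.pi),
      Real.sqrt ((pdx u x s) ^ 2 - pdx v x s)) t = 0 := by
  intro t₀
  have hud : Differentiable ℝ (Function.uncurry u) := hu.differentiable (by simp)
  have hvd : Differentiable ℝ (Function.uncurry v) := hv.differentiable (by simp)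
  have hguc := contDiff_fderiv_apply hu (1, 0)
  have hgvc := contDiff_fderiv_apply hv (1, 0)
  have hAc : ContDiff ℝ 2 (AA u v) := (hguc.pow 2).sub hgvc
  have hApos : ∀ p : ℝ × ℝ, 0 < AA u v p := fun p => by
    have h := hpos p.1 p.2
    rwa [pdx_eq hud, pdx_eq hvd] at h
  have hWct : ∀ p, ContDiffAt ℝ 2 (WW u v) p := fun p =>
    (Real.contDiffAt_sqrt (n := 2) (hApos p).ne').comp p hAc.contDiffAt
  have hWd : Differentiable ℝ (WW u v) := fun p => (hWct p).differentiableAt two_ne_zero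
  have hWcont : Continuous (WW u v) := hWd.continuous
  -- continuity of the t-derivative of W
  have hDtWcont : Continuous (fun p : ℝ × ℝ => fderiv ℝ (WW u v) p (0, 1)) := by
    rw [continuous_iff_continuousAt]
    intro p
    exact (ContinuousLinearMap.apply ℝ ℝ ((0 : ℝ), (1 : ℝ))).continuous.continuousAt.comp
      (((hWct p).fderiv_right (m := 1) (by norm_num)).continuousAt)
  -- rewrite the integrand
  have hInt : (fun s => ∫ x in (0:ℝ)..(2 * Real.pi), Real.sqrt ((pdx u x s) ^ 2 - pdx v x s))
      = fun s => ∫ x in (0:ℝ)..(2 * Real.pi), WW u v (x, s) := by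
    funext s
    apply intervalIntegral.integral_congr
    intro x _
    show Real.sqrt ((pdx u x s) ^ 2 - pdx v x s) = WW u v (x, s)
    rw [pdx_eq hud, pdx_eq hvd]
    rfl
  rw [hInt]
  -- uniform bound for the time derivative on a compact neighbourhood
  obtain ⟨C, hC⟩ :=
    ((isCompact_uIcc (a := (0:ℝ)) (b := 2 * Real.pi)).prod
      (isCompact_Icc (a := t₀ - 1) (b := t₀ + 1))).exists_bound_of_continuousOn
      (hDtWcont.continuousOn)
  have main := intervalIntegral.hasDerivAt_integral_of_dominated_loc_of_deriv_le
    (F := fun s x => WW u v (x, s))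
    (F' := fun s x => fderiv ℝ (WW u v) (x, s) (0, 1))
    (x₀ := t₀) (a := 0) (b := 2 * Real.pi) (μ := MeasureTheory.volume)
    (bound := fun _ => C) (s := Metric.ball t₀ 1) (Metric.ball_mem_nhds t₀ one_pos)
    (Filter.Eventually.of_forall fun s =>
      (hWcont.comp (continuous_id.prodMk continuous_const)).aestronglyMeasurable)
    ((hWcont.comp (continuous_id.prodMk continuous_const)).intervalIntegrable _ _)
    ((hDtWcont.comp (continuous_id.prodMk continuous_const)).aestronglyMeasurable)
    (MeasureTheory.ae_of_all _ fun x hx s hs => by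
      refine hC (x, s) ⟨Set.uIoc_subset_uIcc hx, ?_⟩
      have := Metric.mem_ball.mp hs
      rw [Real.dist_eq] at this
      constructor <;> [linarith [abs_lt.mp this]; linarith [abs_lt.mp this]])
    (intervalIntegrable_const)
    (MeasureTheory.ae_of_all _ fun x hx s hs => sliceT (hWd (x, s)))
  -- the time derivative of W equals the x-derivative of 2 u W
  have hWeq : ∀ x : ℝ, fderiv ℝ (WW u v) (x, t₀) (0, 1)
      = fderiv ℝ (fun p => 2 * Function.uncurry u p * WW u v p) (x, t₀) (1, 0) := fun x =>
    (sliceT (hWd (x, t₀))).unique (core u v hu hv heq1 heq2 hpos x t₀)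
  -- continuity of the x-derivative of 2 u W
  have hGct : ∀ p, ContDiffAt ℝ 2 (fun p => 2 * Function.uncurry u p * WW u v p) p := fun p =>
    ((contDiffAt_const (c := (2:ℝ))).mul (hu.contDiffAt.of_le (WithTop.coe_le_coe.mpr le_top))).mul (hWct p)
  have hGdiff : Differentiable ℝ (fun p => 2 * Function.uncurry u p * WW u v p) :=
    ((hud.const_mul 2).mul hWd)
  have hDxGcont : Continuous
      (fun p : ℝ × ℝ => fderiv ℝ (fun p => 2 * Function.uncurry u p * WW u v p) p (1, 0)) := by
    rw [continuous_iff_continuousAt]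
    intro p
    exact (ContinuousLinearMap.apply ℝ ℝ ((1 : ℝ), (0 : ℝ))).continuous.continuousAt.comp
      (((hGct p).fderiv_right (m := 1) (by norm_num)).continuousAt)
  -- periodicity of the boundary terms
  have hpu : pdx u (2 * Real.pi) t₀ = pdx u 0 t₀ := by
    have h := (hup t₀) 0
    have h2 : deriv (fun y => u y t₀) (0 + 2 * Real.pi) = deriv (fun y => u y t₀) 0 := by
      rw [← deriv_comp_add_const (fun y => u y t₀) (2 * Real.pi) 0]
      congr 1
      funext y
      exact hup t₀ y
    simpa [pdx] using h2
  have hpv : pdx v (2 * Real.pi) t₀ = pdx v 0 t₀ := by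
    have h2 : deriv (fun y => v y t₀) (0 + 2 * Real.pi) = deriv (fun y => v y t₀) 0 := by
      rw [← deriv_comp_add_const (fun y => v y t₀) (2 * Real.pi) 0]
      congr 1
      funext y
      exact hvp t₀ y
    simpa [pdx] using h2
  have hWrepr : ∀ y : ℝ, WW u v (y, t₀) = Real.sqrt ((pdx u y t₀) ^ 2 - pdx v y t₀) := by
    intro y
    rw [pdx_eq hud, pdx_eq hvd]
    rfl
  have hWper : WW u v (2 * Real.pi, t₀) = WW u v (0, t₀) := by
    rw [hWrepr, hWrepr, hpu, hpv]
  have huper : u (2 * Real.pi) t₀ = u 0 t₀ := by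
    have h := (hup t₀) 0
    simpa using h
  -- the integral of the x-derivative over a period vanishes
  have hz : ∫ x in (0:ℝ)..(2 * Real.pi), fderiv ℝ (WW u v) (x, t₀) (0, 1) = 0 := by
    calc ∫ x in (0:ℝ)..(2 * Real.pi), fderiv ℝ (WW u v) (x, t₀) (0, 1)
        = ∫ x in (0:ℝ)..(2 * Real.pi),
            fderiv ℝ (fun p => 2 * Function.uncurry u p * WW u v p) (x, t₀) (1, 0) :=
          intervalIntegral.integral_congr fun x _ => hWeq x
      _ = (fun y => 2 * Function.uncurry u (y, t₀) * WW u v (y, t₀)) (2 * Real.pi)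
          - (fun y => 2 * Function.uncurry u (y, t₀) * WW u v (y, t₀)) 0 :=
          intervalIntegral.integral_eq_sub_of_hasDerivAt
            (fun x _ => sliceX (hGdiff (x, t₀)))
            ((hDxGcont.comp (continuous_id.prodMk continuous_const)).intervalIntegrable _ _)
      _ = 0 := by
          simp only [Function.uncurry_apply_pair]
          rw [hWper, huper]
          ring
  exact main.2.deriv.trans hz
end
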